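/- arXiv:2405.11244 — 6 statements merged into one kernel-verified Lean document; each statement's English description precedes it below -/
import Mathlib

section
/- The following SDBM is unsatisfiable over the integers: x ≡ 0 (mod 20), y ≡ 0 (mod 35), z ≡ 0 (mod 28), 0 ≤ y - x ≤ 5, 20 ≤ x - z ≤ 24, 21 ≤ y - z ≤ 28, even though its underlying system of inequalities is satisfiable over ℤ and the system is GCD-tight and path-closed. -/
/-! Every constraint `x - y ≤ c` between variables with moduli `m`, `n` can be tightened to the
nearest multiple of `gcd m n`, which here leaves `y - x ∈ {0, 5}`, `x - z ∈ {20, 24}` and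
`y - z ∈ {21, 28}`; but then `y - z = (y - x) + (x - z) ∈ {20, 24, 25, 29}`. -/

theorem gcd_dvd_sub_of_dvd {α : Type*} [CommRing α] [GCDMonoid α] {a b x y : α}
    (hx : a ∣ x) (hy : b ∣ y) : gcd a b ∣ x - y :=
  dvd_sub ((gcd_dvd_left a b).trans hx) ((gcd_dvd_right a b).trans hy)

/-- The SDBM `x ≡ 0 (mod 20)`, `y ≡ 0 (mod 35)`, `z ≡ 0 (mod 28)`,
`0 ≤ y - x ≤ 5`, `20 ≤ x - z ≤ 24`, `21 ≤ y - z ≤ 28` is unsatisfiable over ℤ,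
even though its underlying system of inequalities is satisfiable over ℤ. -/
theorem sdbm_counterexample_unsat :
    (¬ ∃ x y z : ℤ, 20 ∣ x ∧ 35 ∣ y ∧ 28 ∣ z ∧
      0 ≤ y - x ∧ y - x ≤ 5 ∧ 20 ≤ x - z ∧ x - z ≤ 24 ∧
      21 ≤ y - z ∧ y - z ≤ 28) ∧
    (∃ x y z : ℤ,
      0 ≤ y - x ∧ y - x ≤ 5 ∧ 20 ≤ x - z ∧ x - z ≤ 24 ∧
      21 ≤ y - z ∧ y - z ≤ 28) := by
  refine ⟨?_, ⟨0, 5, -20, by norm_num⟩⟩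
  rintro ⟨x, y, z, hx, hy, hz, hbounds⟩
  have hyx : (5 : ℤ) ∣ y - x := gcd_dvd_sub_of_dvd hy hx
  have hxz : (4 : ℤ) ∣ x - z := gcd_dvd_sub_of_dvd hx hz
  have hyz : (7 : ℤ) ∣ y - z := gcd_dvd_sub_of_dvd hy hz
  have hyx' : y - x = 0 ∨ y - x = 5 := by omega
  have hxz' : x - z = 20 ∨ x - z = 24 := by omega
  have hyz' : y - z = 21 ∨ y - z = 28 := by omega
  omega
end

section
/- Let H be a path-closed, GCD-tight, variable-bound-free harmonic SDBM (d_1 | d_2 | ⋯ | d_n, all remainders zero). For each k, the projection of the solution set of H onto the variables x_k, ..., x_n equals the solution set of the subsystem consisting of exactly the constraints of H involving only x_k, ..., x_n. -/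
/-- `PathWeight E u v W`: the potential graph of the constraint set `E`
has a path from `u` to `v` of total weight `W`. -/
def PathWeight (n : ℕ) (E : Set (Fin n × Fin n × ℤ)) (u v : Fin n) (W : ℤ) : Prop :=
  ∃ (k : ℕ) (p : Fin (k + 1) → Fin n) (w : Fin k → ℤ),
    p 0 = u ∧ p (Fin.last k) = v ∧
    (∀ i : Fin k, (p i.castSucc, p i.succ, w i) ∈ E) ∧ ∑ i, w i = W

lemma edge_pathWeight {n : ℕ} {E : Set (Fin n × Fin n × ℤ)} {u v : Fin n} {c : ℤ}
    (h : (u, v, c) ∈ E) : PathWeight n E u v c := by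
  refine ⟨1, ![u, v], ![c], by simp, by simp [Fin.last], ?_, by simp⟩
  intro i
  fin_cases i
  simpa using h

lemma two_edge_pathWeight {n : ℕ} {E : Set (Fin n × Fin n × ℤ)} {a b c : Fin n} {c1 c2 : ℤ}
    (h1 : (a, b, c1) ∈ E) (h2 : (b, c, c2) ∈ E) : PathWeight n E a c (c1 + c2) := by
  refine ⟨2, ![a, b, c], ![c1, c2], by simp, by simp [Fin.last], ?_, by simp [Fin.sum_univ_two]⟩
  intro i
  fin_cases i
  · simpa using h1
  · simpa using h2

lemma hsdbm_build (n : ℕ) (E : Set (Fin n × Fin n × ℤ))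
    (d : Fin n → ℤ) (hd : ∀ i, 1 ≤ d i)
    (hharm : ∀ i j : Fin n, i ≤ j → d i ∣ d j)
    (hgcd : ∀ p ∈ E, (Int.gcd (d p.1) (d p.2.1) : ℤ) ∣ p.2.2)
    (hsat : ∃ x : Fin n → ℤ, ∀ p ∈ E, -x p.1 + x p.2.1 ≤ p.2.2)
    (hclosed : ∀ u v W, PathWeight n E u v W →
      ∃ c, (u, v, c) ∈ E ∧ ∀ W', PathWeight n E u v W' → c ≤ W') :
    ∀ (k : ℕ) (y : Fin n → ℤ),
    (∀ i : Fin n, k ≤ i.val → d i ∣ y i) →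
    (∀ p ∈ E, k ≤ p.1.val → k ≤ p.2.1.val → -y p.1 + y p.2.1 ≤ p.2.2) →
    ∃ x : Fin n → ℤ, ((∀ i, d i ∣ x i) ∧ (∀ p ∈ E, -x p.1 + x p.2.1 ≤ p.2.2)) ∧
      ∀ i : Fin n, k ≤ i.val → x i = y i := by
  classical
  intro k
  induction k with
  | zero =>
    intro y hdiv hsaty
    exact ⟨y, ⟨fun i => hdiv i (Nat.zero_le _),
      fun p hp => hsaty p hp (Nat.zero_le _) (Nat.zero_le _)⟩, fun i _ => rfl⟩
  | succ m ih =>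
    intro y hdiv hsaty
    by_cases hm : m < n
    · -- the interesting case: fill in variable m
      set M : Fin n := ⟨m, hm⟩ with hM
      -- minimal edge weight function
      set f : Fin n → Fin n → ℤ := fun u v =>
        if h : ∃ c, (u, v, c) ∈ E ∧ ∀ W', PathWeight n E u v W' → c ≤ W'
        then h.choose else 0 with hfdef
      have hf : ∀ u v c0, (u, v, c0) ∈ E →
          (u, v, f u v) ∈ E ∧ ∀ W', PathWeight n E u v W' → f u v ≤ W' := by
        intro u v c0 hc0
        have hex := hclosed u v c0 (edge_pathWeight hc0)
        have : f u v = hex.choose := by simp [hfdef, dif_pos hex]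
        rw [this]
        exact hex.choose_spec
      set Lset : Finset (Fin n) :=
        Finset.univ.filter (fun j => m < j.val ∧ ∃ c, (M, j, c) ∈ E) with hLset
      set Uset : Finset (Fin n) :=
        Finset.univ.filter (fun j => m < j.val ∧ ∃ c, (j, M, c) ∈ E) with hUset
      set S : Finset ℤ := Lset.image (fun j => y j - f M j) with hS
      set T : Finset ℤ := Uset.image (fun j => y j + f j M) with hT
      set v : ℤ := if hSne : S.Nonempty then S.max' hSne
        else if hTne : T.Nonempty then T.min' hTne else 0 with hv
      -- divisibility of elements of S and T
      have hdivS : ∀ s ∈ S, d M ∣ s := by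
        intro s hs
        rw [hS, Finset.mem_image] at hs
        obtain ⟨j, hj, rfl⟩ := hs
        rw [hLset, Finset.mem_filter] at hj
        obtain ⟨-, hmj, c0, hc0⟩ := hj
        have hMj : M ≤ j := le_of_lt (by exact hmj : M.val < j.val)
        have hdMj : d M ∣ d j := hharm M j hMj
        have hdyj : d M ∣ y j := hdMj.trans (hdiv j hmj)
        have hedge := (hf M j c0 hc0).1
        have hg := hgcd (M, j, f M j) hedge
        have : d M ∣ (Int.gcd (d M) (d j) : ℤ) := by
          rw [Int.gcd_eq_left (by linarith [hd M]) hdMj]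
        exact dvd_sub hdyj (this.trans hg)
      have hdivT : ∀ s ∈ T, d M ∣ s := by
        intro s hs
        rw [hT, Finset.mem_image] at hs
        obtain ⟨j, hj, rfl⟩ := hs
        rw [hUset, Finset.mem_filter] at hj
        obtain ⟨-, hmj, c0, hc0⟩ := hj
        have hMj : M ≤ j := le_of_lt (by exact hmj : M.val < j.val)
        have hdMj : d M ∣ d j := hharm M j hMj
        have hdyj : d M ∣ y j := hdMj.trans (hdiv j hmj)
        have hedge := (hf j M c0 hc0).1
        have hg := hgcd (j, M, f j M) hedge
        have : d M ∣ (Int.gcd (d j) (d M) : ℤ) := by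
          rw [Int.gcd_eq_right (by linarith [hd M]) hdMj]
        exact dvd_add hdyj (this.trans hg)
      have hdv : d M ∣ v := by
        rw [hv]
        split_ifs with hSne hTne
        · exact hdivS _ (S.max'_mem hSne)
        · exact hdivT _ (T.min'_mem hTne)
        · exact dvd_zero _
      -- upper bounds hold
      have hupper : ∀ j c, (j, M, c) ∈ E → m < j.val → v ≤ y j + c := by
        intro j c hjc hmj
        have hjU : j ∈ Uset := by
          rw [hUset, Finset.mem_filter]; exact ⟨Finset.mem_univ _, hmj, c, hjc⟩
        have hTne : T.Nonempty := ⟨y j + f j M, by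
          rw [hT, Finset.mem_image]; exact ⟨j, hjU, rfl⟩⟩
        have hfjM : f j M ≤ c := (hf j M c hjc).2 c (edge_pathWeight hjc)
        rw [hv]
        by_cases hSne : S.Nonempty
        · rw [dif_pos hSne]
          -- v is max of S, an element y j' - f M j'
          obtain ⟨s, hsmem, hsval⟩ : ∃ s ∈ S, S.max' hSne = s := ⟨_, S.max'_mem hSne, rfl⟩
          rw [hS, Finset.mem_image] at hsmem
          obtain ⟨j', hj', hsj'⟩ := hsmem
          rw [hsval, ← hsj']
          rw [hLset, Finset.mem_filter] at hj'
          obtain ⟨-, hmj', c0, hc0⟩ := hj'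
          have hedgeMj' := (hf M j' c0 hc0).1
          -- path j → M → j'
          have hpath := two_edge_pathWeight hjc hedgeMj'
          obtain ⟨c'', hc''E, hc''min⟩ := hclosed j j' _ hpath
          have hle : -y j + y j' ≤ c'' :=
            hsaty (j, j', c'') hc''E hmj hmj'
          have := hc''min _ hpath
          linarith
        · rw [dif_neg hSne, dif_pos hTne]
          have h1 := T.min'_le _ ((by rw [hT, Finset.mem_image]; exact ⟨j, hjU, rfl⟩) :
            y j + f j M ∈ T)
          linarith
      -- lower bounds hold
      have hlower : ∀ j c, (M, j, c) ∈ E → m < j.val → y j - c ≤ v := by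
        intro j c hjc hmj
        have hjL : j ∈ Lset := by
          rw [hLset, Finset.mem_filter]; exact ⟨Finset.mem_univ _, hmj, c, hjc⟩
        have hSne : S.Nonempty := ⟨y j - f M j, by
          rw [hS, Finset.mem_image]; exact ⟨j, hjL, rfl⟩⟩
        have hfMj : f M j ≤ c := (hf M j c hjc).2 c (edge_pathWeight hjc)
        rw [hv, dif_pos hSne]
        have h1 := S.le_max' (y j - f M j) (by rw [hS, Finset.mem_image]; exact ⟨j, hjL, rfl⟩)
        linarith
      -- self loops
      obtain ⟨z, hz⟩ := hsat
      have hself : ∀ c, (M, M, c) ∈ E → (0 : ℤ) ≤ c := by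
        intro c hc
        have := hz (M, M, c) hc
        simpa using this
      -- the extended vector
      set x' : Fin n → ℤ := Function.update y M v with hx'
      have hx'M : x' M = v := Function.update_self M v y
      have hx'ne : ∀ i : Fin n, m < i.val → x' i = y i := by
        intro i hi
        apply Function.update_of_ne
        intro h
        rw [h] at hi
        exact lt_irrefl _ hi
      have hdiv' : ∀ i : Fin n, m ≤ i.val → d i ∣ x' i := by
        intro i hi
        rcases eq_or_lt_of_le hi with h | h
        · have : i = M := Fin.ext h.symm
          rw [this, hx'M]; exact hdv
        · rw [hx'ne i h]; exact hdiv i h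
      have hsat' : ∀ p ∈ E, m ≤ p.1.val → m ≤ p.2.1.val → -x' p.1 + x' p.2.1 ≤ p.2.2 := by
        rintro ⟨a, b, c⟩ hp ha hb
        rcases eq_or_lt_of_le ha with ha' | ha' <;> rcases eq_or_lt_of_le hb with hb' | hb'
        · have haM : a = M := Fin.ext ha'.symm
          have hbM : b = M := Fin.ext hb'.symm
          subst haM; subst hbM
          simp only [neg_add_cancel]
          exact hself c hp
        · have haM : a = M := Fin.ext ha'.symm
          subst haM
          rw [hx'M, hx'ne b hb']
          have := hlower b c hp hb'
          linarith
        · have hbM : b = M := Fin.ext hb'.symm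
          subst hbM
          rw [hx'M, hx'ne a ha']
          have := hupper a c hp ha'
          linarith
        · rw [hx'ne a ha', hx'ne b hb']
          exact hsaty (a, b, c) hp ha' hb'
      obtain ⟨x, hx, hagree⟩ := ih x' hdiv' hsat'
      refine ⟨x, hx, fun i hi => ?_⟩
      have hi' : m < i.val := hi
      rw [hagree i (le_of_lt hi'), hx'ne i hi']
    · -- m ≥ n : everything vacuous
      have hvac : ∀ i : Fin n, ¬ (m ≤ i.val) := by
        intro i h
        exact hm (lt_of_le_of_lt h i.isLt)
      obtain ⟨x, hx, hagree⟩ := ih y (fun i hi => absurd hi (hvac i))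
        (fun p _ hp1 _ => absurd hp1 (hvac p.1))
      exact ⟨x, hx, fun i hi => hagree i (le_trans (Nat.le_succ m) hi)⟩

/-- HSDBM projection lemma: in a path-closed, GCD-tight, variable-bound-free
harmonic SDBM, the projection of the solution set onto the suffix of variables
`x_k, …, x_n` equals the solution set of the constraints involving only those
variables: a vector satisfies the suffix subsystem iff it agrees on the suffix
with a full solution. -/
theorem hsdbm_suffix_projection (n : ℕ) (E : Set (Fin n × Fin n × ℤ))
    (d : Fin n → ℤ) (hd : ∀ i, 1 ≤ d i)
    (hharm : ∀ i j : Fin n, i ≤ j → d i ∣ d j)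
    (hgcd : ∀ p ∈ E, (Int.gcd (d p.1) (d p.2.1) : ℤ) ∣ p.2.2)
    (hsat : ∃ x : Fin n → ℤ, ∀ p ∈ E, -x p.1 + x p.2.1 ≤ p.2.2)
    (hclosed : ∀ u v W, PathWeight n E u v W →
      ∃ c, (u, v, c) ∈ E ∧ ∀ W', PathWeight n E u v W' → c ≤ W')
    (k : ℕ) (y : Fin n → ℤ) :
    ((∀ i : Fin n, k ≤ i.val → d i ∣ y i) ∧
      (∀ p ∈ E, k ≤ p.1.val → k ≤ p.2.1.val → -y p.1 + y p.2.1 ≤ p.2.2)) ↔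
    (∃ x : Fin n → ℤ, ((∀ i, d i ∣ x i) ∧ (∀ p ∈ E, -x p.1 + x p.2.1 ≤ p.2.2)) ∧
      ∀ i : Fin n, k ≤ i.val → x i = y i) := by
  constructor
  · rintro ⟨hdiv, hsaty⟩
    exact hsdbm_build n E d hd hharm hgcd hsat hclosed k y hdiv hsaty
  · rintro ⟨x, ⟨hxdiv, hxsat⟩, hagree⟩
    constructor
    · intro i hi
      rw [← hagree i hi]
      exact hxdiv i
    · intro p hp h1 h2
      rw [← hagree p.1 h1, ← hagree p.2.1 h2]
      exact hxsat p hp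
end

section
/- Let S = {x ∈ ℝⁿ : Ax ≤ b} be a nonempty polyhedron with A an integer matrix, let L ⊆ ℤⁿ be the solution set of single-variable congruence constraints x_i ≡ r_i (mod d_i), with D the lcm of the d_i, and suppose S ∩ L ≠ ∅. Then for every y ∈ S there exists x ∈ S ∩ L with ‖x - y‖_∞ ≤ n · D · MASD(A). -/
set_option linter.unusedSectionVars false
set_option maxHeartbeats 1000000

open Matrix BigOperators Submodule

namespace SDBMAux



lemma mixedMinor {m n : ℕ} (A : Matrix (Fin m) (Fin n) ℤ) (M : ℤ)
    (hM : ∀ (s : ℕ) (f : Fin s → Fin m) (g : Fin s → Fin n),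
      Function.Injective f → Function.Injective g → |(A.submatrix f g).det| ≤ M) :
    ∀ (s : ℕ) (h : Fin s → Fin n → ℤ) (g : Fin s → Fin n),
      (∀ k, (∃ i, ∃ ε : ℤ, |ε| ≤ 1 ∧ h k = ε • A i) ∨ (∃ j, ∃ c : ℤ, |c| ≤ 1 ∧ h k = Pi.single j c)) →
      |(Matrix.of fun a b => h a (g b)).det| ≤ M := by
  have hM1 : 1 ≤ M := by
    have := hM 0 (fun a => a.elim0) (fun a => a.elim0)
      (fun a => a.elim0) (fun a => a.elim0)
    simpa [Matrix.det_fin_zero] using this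
  have hM0 : (0:ℤ) ≤ M := le_trans one_pos.le hM1
  intro s
  induction s with
  | zero =>
    intro h g _
    simpa [Matrix.det_fin_zero] using hM1
  | succ s ih =>
    intro h g hrow
    by_cases hg : Function.Injective g
    · by_cases hone : ∃ k j c, |c| ≤ 1 ∧ h k = Pi.single j c
      · obtain ⟨k₀, j, c, hc, hk⟩ := hone
        rw [Matrix.det_succ_row _ k₀]
        by_cases hj : ∃ l₀, g l₀ = j
        · obtain ⟨l₀, hl₀⟩ := hj
          rw [Finset.sum_eq_single l₀]
          · have hminor := ih (fun a => h (k₀.succAbove a)) (fun b => g (l₀.succAbove b))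
              (fun a => hrow (k₀.succAbove a))
            have hentry : (Matrix.of fun a b => h a (g b)) k₀ l₀ = c := by
              simp [hk, hl₀]
            rw [hentry]
            have habs : |((-1:ℤ) ^ ((k₀:ℕ) + (l₀:ℕ)) * c *
                ((Matrix.of fun a b => h a (g b)).submatrix k₀.succAbove l₀.succAbove).det)|
                = |c| * |((Matrix.of fun a b => h a (g b)).submatrix k₀.succAbove l₀.succAbove).det| := by
              rw [abs_mul, abs_mul, abs_pow, abs_neg, abs_one, one_pow, one_mul]
            rw [habs]
            have : ((Matrix.of fun a b => h a (g b)).submatrix k₀.succAbove l₀.succAbove) =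
                (Matrix.of fun a b => h (k₀.succAbove a) (g (l₀.succAbove b))) := rfl
            rw [this]
            calc |c| * |(Matrix.of fun a b => h (k₀.succAbove a) (g (l₀.succAbove b))).det|
                ≤ 1 * M := by
                  apply mul_le_mul hc hminor (abs_nonneg _) zero_le_one
              _ = M := one_mul M
          · intro l _ hl
            have : g l ≠ j := fun hgl => hl (hg (hgl.trans hl₀.symm))
            have hz : (Matrix.of fun a b => h a (g b)) k₀ l = 0 := by
              simp [hk, Pi.single_apply, this]
            rw [hz]; ring
          · intro hmem; exact absurd (Finset.mem_univ l₀) hmem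
        · push_neg at hj
          have hallz : ∀ l : Fin (s+1), (-1:ℤ) ^ ((k₀:ℕ) + (l:ℕ)) * (Matrix.of fun a b => h a (g b)) k₀ l *
              ((Matrix.of fun a b => h a (g b)).submatrix k₀.succAbove l.succAbove).det = 0 := by
            intro l
            have hz : (Matrix.of fun a b => h a (g b)) k₀ l = 0 := by
              simp [hk, Pi.single_apply, hj l]
            rw [hz]; ring
          rw [Finset.sum_eq_zero (fun l _ => hallz l)]
          simpa using hM0
      · push_neg at hone
        have hAr : ∀ k, ∃ i, ∃ ε : ℤ, |ε| ≤ 1 ∧ h k = ε • A i := by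
          intro k
          rcases hrow k with h1 | ⟨j, c, hc, hk⟩
          · exact h1
          · exact absurd hk (hone k j c hc)
        choose f ε hε hf using hAr
        have hmat : (Matrix.of fun a b => h a (g b)) =
            Matrix.of fun a b => ε a * (A.submatrix f g) a b := by
          ext a b
          simp [hf a, Matrix.submatrix_apply]
        rw [hmat, Matrix.det_mul_column]
        rw [abs_mul]
        have hprod : |∏ i, ε i| ≤ 1 := by
          rw [Finset.abs_prod]
          calc ∏ i, |ε i| ≤ ∏ _i : Fin (s+1), (1:ℤ) :=
                Finset.prod_le_prod (fun i _ => abs_nonneg _) (fun i _ => hε i)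
            _ = 1 := by simp
        have hsub : |(A.submatrix f g).det| ≤ M := by
          by_cases hfinj : Function.Injective f
          · exact hM _ f g hfinj hg
          · simp only [Function.Injective] at hfinj
            push_neg at hfinj
            obtain ⟨a, b, hab, hne⟩ := hfinj
            have : (A.submatrix f g).det = 0 := by
              apply Matrix.det_zero_of_row_eq hne
              funext l
              simp [Matrix.submatrix_apply, hab]
            rw [this]; simpa using hM0
        calc |∏ i, ε i| * |(A.submatrix f g).det| ≤ 1 * M :=
              mul_le_mul hprod hsub (abs_nonneg _) zero_le_one
          _ = M := one_mul M
    · simp only [Function.Injective] at hg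
      push_neg at hg
      obtain ⟨a, b, hab, hne⟩ := hg
      have : (Matrix.of fun a b => h a (g b)).det = 0 := by
        apply Matrix.det_zero_of_column_eq hne
        intro k
        simp [hab]
      rw [this]; simpa using hM0




lemma snoc_det_expand {K : Type*} [CommRing K] {n' : ℕ} (T : Fin n' → Fin (n'+1) → K)
    (x : Fin (n'+1) → K) :
    (Matrix.of (Fin.snoc T x)).det =
      ∑ l : Fin (n'+1), (-1:K) ^ ((n':ℕ) + (l:ℕ)) * x l * (Matrix.of fun a b => T a (l.succAbove b)).det := by
  rw [Matrix.det_succ_row _ (Fin.last n')]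
  apply Finset.sum_congr rfl
  intro l _
  have h1 : (Matrix.of (Fin.snoc T x)) (Fin.last n') l = x l := by
    simp [Fin.snoc_last]
  have h2 : (Matrix.of (Fin.snoc T x)).submatrix (Fin.last n').succAbove l.succAbove =
      Matrix.of fun a b => T a (l.succAbove b) := by
    ext a b
    simp [Fin.succAbove_last, Fin.snoc_castSucc]
  rw [h1, h2]
  norm_num

lemma cramerVec (n' : ℕ) (R : Fin n' → Fin (n'+1) → ℤ)
    (hR : LinearIndependent ℝ (fun k => fun j => (R k j : ℝ))) :
    ∃ v : Fin (n'+1) → ℤ,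
      (∃ j, v j ≠ 0) ∧
      (∀ k, ∑ j, R k j * v j = 0) ∧
      (∀ j, v j = (Matrix.of (Fin.snoc R (Pi.single j 1))).det) := by
  set minor : Fin (n'+1) → ℤ := fun l => (Matrix.of fun a b => R a (l.succAbove b)).det with hminor
  set v : Fin (n'+1) → ℤ := fun j => (-1:ℤ) ^ ((n':ℕ) + (j:ℕ)) * minor j with hv
  refine ⟨v, ?_, ?_, ?_⟩
  · -- nonzero
    by_contra hall
    push_neg at hall
    have hmz : ∀ j, minor j = 0 := by
      intro j
      have := hall j
      rw [hv] at this
      simp only [mul_eq_zero] at this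
      rcases this with h | h
      · exact absurd h (pow_ne_zero _ (by norm_num))
      · exact h
    -- real side
    set Rr : Fin n' → Fin (n'+1) → ℝ := fun k j => (R k j : ℝ) with hRr
    have hspan : span ℝ (Set.range Rr) ≠ ⊤ := by
      intro htop
      have h1 : Module.finrank ℝ (span ℝ (Set.range Rr)) ≤ n' := by
        simpa [Set.finrank] using finrank_range_le_card Rr
      rw [htop, finrank_top] at h1
      simp [Module.finrank_pi] at h1
    obtain ⟨xr, hxr⟩ : ∃ x, x ∉ span ℝ (Set.range Rr) := by
      by_contra hc
      push_neg at hc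
      exact hspan (Submodule.eq_top_iff'.mpr hc)
    have hsnoc : LinearIndependent ℝ (Fin.snoc Rr xr) :=
      linearIndependent_fin_snoc.mpr ⟨hR, hxr⟩
    have hdet0 : (Matrix.of (Fin.snoc Rr xr)).det = 0 := by
      rw [snoc_det_expand]
      apply Finset.sum_eq_zero
      intro l _
      have : (Matrix.of fun a b => Rr a (l.succAbove b)).det = ((minor l : ℤ) : ℝ) := by
        rw [hminor]
        rw [show (Matrix.of fun a b => Rr a (l.succAbove b)) =
          (Int.castRingHom ℝ).mapMatrix (Matrix.of fun a b => R a (l.succAbove b)) from rfl]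
        rw [← RingHom.map_det (Int.castRingHom ℝ)]
        rfl
      rw [this, hmz l]
      norm_num
    have hne : (Matrix.of (Fin.snoc Rr xr)).det ≠ 0 := by
      rw [Ne, ← Matrix.exists_vecMul_eq_zero_iff]
      rintro ⟨w, hw, hwv⟩
      apply hw
      have := Fintype.linearIndependent_iff.mp hsnoc w ?_
      · funext k; exact this k
      · funext j
        have := congrFun hwv j
        simpa [Matrix.vecMul, dotProduct] using this
    exact hne hdet0
  · -- orthogonality
    intro k
    have h0 : (Matrix.of (Fin.snoc R (R k))).det = 0 := by
      apply Matrix.det_zero_of_row_eq (i := Fin.castSucc k) (j := Fin.last n')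
      · exact (Fin.castSucc_lt_last k).ne
      · funext b
        simp [Fin.snoc_castSucc, Fin.snoc_last]
    rw [snoc_det_expand] at h0
    rw [← h0]
    apply Finset.sum_congr rfl
    intro l _
    rw [hv]
    ring
  · -- formula
    intro j
    rw [snoc_det_expand]
    rw [Finset.sum_eq_single j]
    · rw [hv, Pi.single_eq_same]
      ring
    · intro l _ hl
      rw [Pi.single_eq_of_ne hl]
      ring
    · intro hj; exact absurd (Finset.mem_univ j) hj




variable {n : ℕ} {ι : Type*} [Fintype ι]

def dotIR {n : ℕ} (c : Fin n → ℤ) (x : Fin n → ℝ) : ℝ := ∑ j, (c j : ℝ) * x j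

lemma dotIR_add (c : Fin n → ℤ) (x y : Fin n → ℝ) :
    dotIR c (x + y) = dotIR c x + dotIR c y := by
  simp [dotIR, mul_add, Finset.sum_add_distrib]

lemma dotIR_smul (c : Fin n → ℤ) (a : ℝ) (x : Fin n → ℝ) :
    dotIR c (a • x) = a * dotIR c x := by
  simp only [dotIR, Pi.smul_apply, smul_eq_mul, Finset.mul_sum]
  apply Finset.sum_congr rfl; intros; ring

lemma dotIR_neg (c : Fin n → ℤ) (x : Fin n → ℝ) : dotIR c (-x) = - dotIR c x := by
  simp [dotIR, Finset.sum_neg_distrib]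

lemma dotIR_cast (c : Fin n → ℤ) (v : Fin n → ℤ) :
    dotIR c (fun j => (v j : ℝ)) = ((∑ j, c j * v j : ℤ) : ℝ) := by
  simp [dotIR]

def Vsp (B : ι → Fin n → ℤ) (w : Fin n → ℝ) : Submodule ℝ (Fin n → ℝ) where
  carrier := {x | ∀ l, dotIR (B l) w = 0 → dotIR (B l) x = 0}
  add_mem' := by
    intro a b ha hb l hl
    rw [dotIR_add, ha l hl, hb l hl]; ring
  zero_mem' := by
    intro l hl; simp [dotIR]
  smul_mem' := by
    intro c x hx l hl
    rw [dotIR_smul, hx l hl]; ring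

lemma mem_Vsp {B : ι → Fin n → ℤ} {w x : Fin n → ℝ} :
    x ∈ Vsp B w ↔ ∀ l, dotIR (B l) w = 0 → dotIR (B l) x = 0 := Iff.rfl

lemma self_mem_Vsp {B : ι → Fin n → ℤ} {w : Fin n → ℝ} : w ∈ Vsp B w :=
  fun _ hl => hl

lemma extremeRay (B : ι → Fin n → ℤ) (M : ℤ)
    (HB : ∀ (s : ℕ) (h : Fin s → Fin n → ℤ) (g : Fin s → Fin n),
      (∀ k, (∃ l, h k = B l) ∨ (∃ j, ∃ c : ℤ, |c| ≤ 1 ∧ h k = Pi.single j c)) →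
      |(Matrix.of fun a b => h a (g b)).det| ≤ M)
    (Hsep : ∀ z : Fin n → ℝ, z ≠ 0 → ∃ l, dotIR (B l) z ≠ 0) :
    ∀ (k : ℕ) (w : Fin n → ℝ), Module.finrank ℝ (Vsp B w) ≤ k →
      (∀ l, 0 ≤ dotIR (B l) w) → w ≠ 0 →
      ∃ v : Fin n → ℤ,
        (fun j => (v j : ℝ)) ≠ 0 ∧
        (∀ l, 0 ≤ dotIR (B l) (fun j => (v j : ℝ))) ∧
        (∀ j, |v j| ≤ M) ∧
        (∀ l, dotIR (B l) w = 0 → dotIR (B l) (fun j => (v j : ℝ)) = 0) := by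
  classical
  intro k
  induction k with
  | zero =>
    intro w hrk _ hw0
    exfalso
    rw [Nat.le_zero, Submodule.finrank_eq_zero] at hrk
    exact hw0 (by simpa [hrk] using (self_mem_Vsp (B := B) (w := w)))
  | succ k ih =>
    intro w hrk hfeas hw0
    by_cases hle : Module.finrank ℝ (Vsp B w) ≤ k
    · exact ih w hle hfeas hw0
    · have hrkeq : Module.finrank ℝ (Vsp B w) = k + 1 := le_antisymm hrk (by omega)
      have hspanle : span ℝ {w} ≤ Vsp B w := by
        rw [Submodule.span_le, Set.singleton_subset_iff]
        exact self_mem_Vsp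
      have hspanrk : Module.finrank ℝ (span ℝ {w}) = 1 := finrank_span_singleton hw0
      by_cases hk0 : k = 0
      · -- Cramer case: finrank (Vsp B w) = 1
        subst hk0
        have hVeq : span ℝ {w} = Vsp B w :=
          Submodule.eq_of_le_of_finrank_le hspanle (by omega)
        -- n must be positive
        rcases n with - | n'
        · exact absurd (funext fun j => j.elim0) hw0
        -- the matrix of tight rows
        set Mw : Matrix ι (Fin (n'+1)) ℝ :=
          Matrix.of (fun l j => if dotIR (B l) w = 0 then (B l j : ℝ) else 0) with hMw
        have hrowMw : ∀ l, Mw l = if dotIR (B l) w = 0 then (fun j => (B l j : ℝ)) else 0 := by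
          intro l
          funext j
          by_cases h : dotIR (B l) w = 0 <;> simp [hMw, h]
        have hker : LinearMap.ker Mw.mulVecLin = Vsp B w := by
          ext x
          constructor
          · intro hx
            have hx' : Mw.mulVec x = 0 := hx
            intro l hl
            have h2 := congrFun hx' l
            simp only [Matrix.mulVec, dotProduct, Pi.zero_apply, hMw,
              Matrix.of_apply] at h2
            have key : (∑ j, (if dotIR (B l) w = 0 then (B l j:ℝ) else 0) * x j)
                = ∑ j, (B l j : ℝ) * x j :=
              Finset.sum_congr rfl (fun j _ => by rw [if_pos hl])
            show (∑ j, (B l j : ℝ) * x j) = 0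
            rw [← key]
            exact h2
          · intro hx
            have hx' : ∀ l, dotIR (B l) w = 0 → dotIR (B l) x = 0 := hx
            show Mw.mulVec x = 0
            funext l
            simp only [Matrix.mulVec, dotProduct, Pi.zero_apply, hMw,
              Matrix.of_apply]
            by_cases hl : dotIR (B l) w = 0
            · have h3 := hx' l hl
              rw [show dotIR (B l) x = ∑ j, (B l j : ℝ) * x j from rfl] at h3
              have key : (∑ j, (if dotIR (B l) w = 0 then (B l j:ℝ) else 0) * x j)
                  = ∑ j, (B l j : ℝ) * x j :=
                Finset.sum_congr rfl (fun j _ => by rw [if_pos hl])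
              rw [key]
              exact h3
            · apply Finset.sum_eq_zero
              intro j _
              rw [if_neg hl, zero_mul]
        have hrn := LinearMap.finrank_range_add_finrank_ker Mw.mulVecLin
        rw [hker, hrkeq] at hrn
        simp only [Module.finrank_pi, Fintype.card_fin] at hrn
        have hrankMw : Mw.rank = n' := by
          have : Mw.rank = Module.finrank ℝ (LinearMap.range Mw.mulVecLin) := rfl
          omega
        have hrows : Module.finrank ℝ (span ℝ (Set.range (fun l => Mw l))) = n' := by
          have h1 : Mwᵀ.rank = Mw.rank := Matrix.rank_transpose Mw
          have h2 : LinearMap.range Mwᵀ.mulVecLin = span ℝ (Set.range Mwᵀᵀ) :=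
            Matrix.range_mulVecLin Mwᵀ
          rw [Matrix.transpose_transpose] at h2
          have : Mwᵀ.rank = Module.finrank ℝ (span ℝ (Set.range (fun l => Mw l))) := by
            rw [Matrix.rank, h2]
          omega
        obtain ⟨t, htsub, htspan, htind⟩ := exists_linearIndependent ℝ (Set.range (fun l => Mw l))
        have htfin : t.Finite := htind.set_finite_of_isNoetherian
        haveI : Fintype t := htfin.fintype
        have htcard : t.toFinset.card = n' := by
          have := finrank_span_set_eq_card htind
          rw [htspan, hrows] at this
          omega
        have hcardt : Fintype.card t = n' := by rw [← Set.toFinset_card]; exact htcard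
        -- enumerate t
        set e := Fintype.equivFinOfCardEq hcardt with he
        set rfam : Fin n' → (Fin (n'+1) → ℝ) := fun a => ((e.symm a : t) : Fin (n'+1) → ℝ)
          with hrfam
        -- integer preimages
        have hpre : ∀ a : Fin n', ∃ l, dotIR (B l) w = 0 ∧ rfam a = fun j => (B l j : ℝ) := by
          intro a
          have hmem : (rfam a) ∈ t := (e.symm a).2
          obtain ⟨l, hl⟩ := htsub hmem
          have hl' : Mw l = rfam a := hl
          by_cases htight : dotIR (B l) w = 0
          · refine ⟨l, htight, ?_⟩
            rw [← hl', hrowMw l, if_pos htight]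
          · exfalso
            have h0 : rfam a = 0 := by rw [← hl', hrowMw l, if_neg htight]
            have := htind.ne_zero ⟨rfam a, hmem⟩
            exact this (by exact_mod_cast h0)
        choose lsel hlsel1 hlsel2 using hpre
        set Rfam : Fin n' → (Fin (n'+1) → ℤ) := fun a => B (lsel a) with hRfam
        have hRr : (fun a => (fun j => ((Rfam a j : ℤ) : ℝ))) = rfam := by
          funext a
          exact (hlsel2 a).symm
        have hind : LinearIndependent ℝ (fun a => (fun j => ((Rfam a j : ℤ) : ℝ))) := by
          rw [hRr, hrfam]
          exact htind.comp _ (e.symm.injective)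
        obtain ⟨v, hvnz, hvorth, hvform⟩ := cramerVec n' Rfam hind
        -- bound on v
        have hvbound : ∀ j, |v j| ≤ M := by
          intro j
          rw [hvform j]
          have := HB (n'+1) (Fin.snoc Rfam (Pi.single j 1)) id ?_
          · exact this
          · intro a
            refine Fin.lastCases ?_ ?_ a
            · right; exact ⟨j, 1, by norm_num, by simp⟩
            · intro a'
              left
              exact ⟨lsel a', by simp [Fin.snoc_castSucc, hRfam]⟩
        -- orthogonality to all tight rows
        set vr : Fin (n'+1) → ℝ := fun j => (v j : ℝ) with hvr
        have hvrnz : vr ≠ 0 := by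
          obtain ⟨j, hj⟩ := hvnz
          intro h
          have h2 := congrFun h j
          rw [Pi.zero_apply] at h2
          have h3 : ((v j : ℤ) : ℝ) = 0 := h2
          exact hj (by exact_mod_cast h3)
        have hψ : ∀ l, dotIR (B l) w = 0 → dotIR (B l) vr = 0 := by
          -- build the linear functional y ↦ ∑ j, y j * v j
          set ψ : (Fin (n'+1) → ℝ) →ₗ[ℝ] ℝ :=
            { toFun := fun y => ∑ j, y j * (v j : ℝ)
              map_add' := by intros; simp [add_mul, Finset.sum_add_distrib]
              map_smul' := by
                intros c y
                simp only [Pi.smul_apply, smul_eq_mul, RingHom.id_apply, Finset.mul_sum]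
                apply Finset.sum_congr rfl; intros; ring } with hψdef
          have hψt : ∀ x ∈ t, ψ x = 0 := by
            intro x hx
            have hxe : x = rfam (e ⟨x, hx⟩) := by
              rw [hrfam]
              simp
            rw [hxe, ← hRr]
            have : ψ (fun j => ((Rfam (e ⟨x, hx⟩) j : ℤ) : ℝ)) =
                ((∑ j, Rfam (e ⟨x, hx⟩) j * v j : ℤ) : ℝ) := by
              simp [hψdef]
            rw [this, hvorth]
            norm_num
          have hsub : span ℝ t ≤ LinearMap.ker ψ := by
            rw [Submodule.span_le]
            intro x hx
            exact hψt x hx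
          intro l hl
          have hrow : (fun j => ((B l j : ℤ) : ℝ)) ∈ span ℝ t := by
            rw [htspan]
            apply Submodule.subset_span
            exact ⟨l, by show Mw l = _; rw [hrowMw l, if_pos hl]⟩
          have := hsub hrow
          simpa [hψdef, dotIR, LinearMap.mem_ker, mul_comm] using this
        -- vr ∈ Vsp = span {w}
        have hvrmem : vr ∈ span ℝ {w} := by
          rw [hVeq]
          exact hψ
        obtain ⟨c, hc⟩ := Submodule.mem_span_singleton.mp hvrmem
        have hcne : c ≠ 0 := by
          rintro rfl
          simp at hc
          exact hvrnz hc.symm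
        rcases lt_or_gt_of_ne hcne with hcneg | hcpos
        · refine ⟨-v, ?_, ?_, ?_, ?_⟩
          · intro h
            apply hvrnz
            funext j
            have := congrFun h j
            simp only [Int.cast_neg, Pi.zero_apply, neg_eq_zero] at this
            simpa [hvr] using this
          · intro l
            have : dotIR (B l) (fun j => ((-v) j : ℝ)) = - dotIR (B l) vr := by
              rw [hvr, ← dotIR_neg]
              congr 1
              funext j
              simp
            rw [this, ← hc, dotIR_smul]
            have := hfeas l
            nlinarith
          · intro j; rw [Pi.neg_apply, abs_neg]; exact hvbound j
          · intro l hl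
            have : dotIR (B l) (fun j => ((-v) j : ℝ)) = - dotIR (B l) vr := by
              rw [hvr, ← dotIR_neg]
              congr 1
              funext j
              simp
            rw [this, hψ l hl, neg_zero]
        · refine ⟨v, hvrnz, ?_, hvbound, hψ⟩
          intro l
          rw [show (fun j => ((v j : ℤ) : ℝ)) = vr from rfl, ← hc, dotIR_smul]
          have := hfeas l
          nlinarith
      · -- step case: finrank ≥ 2
        have hk1 : 2 ≤ k + 1 := by omega
        have hnotle : ¬ (Vsp B w ≤ span ℝ {w}) := by
          intro hle2
          have := Submodule.finrank_mono hle2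
          omega
        obtain ⟨z, hzV, hzs⟩ := SetLike.not_le_iff_exists.mp hnotle
        clear hnotle
        have hz0 : z ≠ 0 := fun h => hzs (by rw [h]; exact Submodule.zero_mem _)
        obtain ⟨l₀, hl₀⟩ := Hsep z hz0
        -- choose z' with some strictly negative dot
        obtain ⟨z', hz'V, hz's, hz'neg⟩ :
            ∃ z', z' ∈ Vsp B w ∧ z' ∉ span ℝ {w} ∧ ∃ l, dotIR (B l) z' < 0 := by
          by_cases hneg : ∃ l, dotIR (B l) z < 0
          · exact ⟨z, hzV, hzs, hneg⟩
          · push_neg at hneg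
            refine ⟨-z, Submodule.neg_mem _ hzV, ?_, l₀, ?_⟩
            · intro h
              exact hzs (by simpa using Submodule.neg_mem _ h)
            · rw [dotIR_neg]
              have h1 := hneg l₀
              rcases lt_or_gt_of_ne hl₀ with h | h
              · linarith
              · linarith
        set Tneg := Finset.univ.filter (fun l => dotIR (B l) z' < 0) with hTneg
        have hTne : Tneg.Nonempty := by
          obtain ⟨l, hl⟩ := hz'neg
          exact ⟨l, by simp [hTneg, hl]⟩
        set t₀ := Tneg.inf' hTne (fun l => dotIR (B l) w / (- dotIR (B l) z')) with ht₀
        have ht₀0 : 0 ≤ t₀ := by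
          apply Finset.le_inf'
          intro l hl
          rw [hTneg, Finset.mem_filter] at hl
          exact div_nonneg (hfeas l) (by linarith [hl.2])
        set w' := w + t₀ • z' with hw'
        have hdotw' : ∀ l, dotIR (B l) w' = dotIR (B l) w + t₀ * dotIR (B l) z' := by
          intro l
          rw [hw', dotIR_add, dotIR_smul]
        have hfeas' : ∀ l, 0 ≤ dotIR (B l) w' := by
          intro l
          rw [hdotw']
          by_cases hl : dotIR (B l) z' < 0
          · have hmem : l ∈ Tneg := by simp [hTneg, hl]
            have := Finset.inf'_le (f := fun l => dotIR (B l) w / (- dotIR (B l) z')) hmem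
            rw [← ht₀] at this
            have h2 : t₀ * (- dotIR (B l) z') ≤ dotIR (B l) w :=
              (le_div_iff₀ (by linarith)).mp this
            rw [mul_neg] at h2
            linarith
          · push_neg at hl
            nlinarith [mul_nonneg ht₀0 hl, hfeas l]
        obtain ⟨lstar, hlstarmem, hlstareq⟩ := Finset.exists_mem_eq_inf' hTne
          (fun l => dotIR (B l) w / (- dotIR (B l) z'))
        have hlstarneg : dotIR (B lstar) z' < 0 := by
          rw [hTneg, Finset.mem_filter] at hlstarmem
          exact hlstarmem.2
        have hlstar0 : dotIR (B lstar) w' = 0 := by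
          have hne2 : dotIR (B lstar) z' ≠ 0 := ne_of_lt hlstarneg
          rw [hdotw', ht₀, hlstareq]
          have h4 : dotIR (B lstar) w / -dotIR (B lstar) z' * dotIR (B lstar) z'
              = - dotIR (B lstar) w := by
            rw [div_neg, neg_mul, div_mul_cancel₀ _ hne2]
          rw [h4]
          ring
        have htight : ∀ l, dotIR (B l) w = 0 → dotIR (B l) w' = 0 := by
          intro l hl
          rw [hdotw', hl, hz'V l hl]
          ring
        have hVle : Vsp B w' ≤ Vsp B w := by
          intro x hx l hl
          exact hx l (htight l hl)
        have hVlt : Vsp B w' < Vsp B w := by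
          refine lt_of_le_of_ne hVle ?_
          intro heq
          have hz'mem : z' ∈ Vsp B w' := heq ▸ hz'V
          have := hz'mem lstar hlstar0
          linarith
        have hrk' : Module.finrank ℝ (Vsp B w') ≤ k := by
          have := Submodule.finrank_lt_finrank_of_lt hVlt
          omega
        have hw'0 : w' ≠ 0 := by
          intro h
          have hsum : w + t₀ • z' = 0 := h
          by_cases ht0 : t₀ = 0
          · rw [ht0, zero_smul, add_zero] at hsum
            exact hw0 hsum
          · apply hz's
            rw [Submodule.mem_span_singleton]
            refine ⟨-t₀⁻¹, ?_⟩
            have hteq : t₀ • z' = -w := by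
              rw [eq_neg_iff_add_eq_zero, add_comm]
              exact hsum
            have := congrArg (fun y => t₀⁻¹ • y) hteq
            simp only [smul_smul, inv_mul_cancel₀ ht0, one_smul] at this
            rw [this, smul_neg, neg_smul]
        obtain ⟨v, hv1, hv2, hv3, hv4⟩ := ih w' hrk' hfeas' hw'0
        exact ⟨v, hv1, hv2, hv3, fun l hl => hv4 l (htight l hl)⟩


lemma coneDecomp (B : ι → Fin n → ℤ) (M : ℤ)
    (HB : ∀ (s : ℕ) (h : Fin s → Fin n → ℤ) (g : Fin s → Fin n),
      (∀ k, (∃ l, h k = B l) ∨ (∃ j, ∃ c : ℤ, |c| ≤ 1 ∧ h k = Pi.single j c)) →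
      |(Matrix.of fun a b => h a (g b)).det| ≤ M)
    (Hsep : ∀ z : Fin n → ℝ, z ≠ 0 → ∃ l, dotIR (B l) z ≠ 0) :
    ∀ (c : ℕ) (u : Fin n → ℝ), Module.finrank ℝ (Vsp B u) ≤ c →
      (∀ l, 0 ≤ dotIR (B l) u) →
      ∃ (N : ℕ) (lam : Fin N → ℝ) (v : Fin N → Fin n → ℤ),
        N ≤ c ∧
        (∀ k, 0 < lam k) ∧
        (∀ k, (fun j => (v k j : ℝ)) ≠ 0) ∧
        (∀ k l, 0 ≤ dotIR (B l) (fun j => (v k j : ℝ))) ∧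
        (∀ k j, |v k j| ≤ M) ∧
        u = ∑ k, lam k • (fun j => (v k j : ℝ)) := by
  classical
  intro c
  induction c with
  | zero =>
    intro u hrk _
    have hbot : Vsp B u = ⊥ := by
      rw [← Submodule.finrank_eq_zero (R := ℝ) (M := Fin n → ℝ)]
      omega
    have hu0 : u = 0 := by
      have := self_mem_Vsp (B := B) (w := u)
      rw [hbot] at this
      simpa using this
    exact ⟨0, Fin.elim0, Fin.elim0, le_refl 0, fun k => k.elim0, fun k => k.elim0,
      fun k => k.elim0, fun k => k.elim0, by simp [hu0]⟩
  | succ c ih =>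
    intro u hrk hfeas
    by_cases hu0 : u = 0
    · exact ⟨0, Fin.elim0, Fin.elim0, by omega, fun k => k.elim0, fun k => k.elim0,
        fun k => k.elim0, fun k => k.elim0, by simp [hu0]⟩
    obtain ⟨v₀, hv1, hv2, hv3, hv4⟩ := extremeRay B M HB Hsep (c+1) u hrk hfeas hu0
    set v0r : Fin n → ℝ := fun j => (v₀ j : ℝ) with hv0r
    obtain ⟨l₁, hl₁⟩ := Hsep v0r hv1
    have hl₁pos : 0 < dotIR (B l₁) v0r := lt_of_le_of_ne (hv2 l₁) (Ne.symm hl₁)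
    set Tpos := Finset.univ.filter (fun l => 0 < dotIR (B l) v0r) with hTpos
    have hTne : Tpos.Nonempty := ⟨l₁, by simp [hTpos, hl₁pos]⟩
    set t₀ := Tpos.inf' hTne (fun l => dotIR (B l) u / dotIR (B l) v0r) with ht₀
    have ht₀0 : 0 ≤ t₀ := by
      apply Finset.le_inf'
      intro l hl
      rw [hTpos, Finset.mem_filter] at hl
      exact div_nonneg (hfeas l) (le_of_lt hl.2)
    set u' := u - t₀ • v0r with hu'
    have hdotu' : ∀ l, dotIR (B l) u' = dotIR (B l) u - t₀ * dotIR (B l) v0r := by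
      intro l
      rw [hu', sub_eq_add_neg, dotIR_add, ← smul_neg, dotIR_smul, dotIR_neg]
      ring
    have hfeas' : ∀ l, 0 ≤ dotIR (B l) u' := by
      intro l
      rw [hdotu']
      by_cases hl : 0 < dotIR (B l) v0r
      · have hmem : l ∈ Tpos := by simp [hTpos, hl]
        have hle2 := Finset.inf'_le (f := fun l => dotIR (B l) u / dotIR (B l) v0r) hmem
        rw [← ht₀] at hle2
        have h2 : t₀ * dotIR (B l) v0r ≤ dotIR (B l) u := (le_div_iff₀ hl).mp hle2
        linarith
      · push_neg at hl
        nlinarith [mul_nonneg ht₀0 (neg_nonneg.mpr hl), hfeas l]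
    have htight : ∀ l, dotIR (B l) u = 0 → dotIR (B l) u' = 0 := by
      intro l hl
      rw [hdotu', hl, hv4 l hl]
      ring
    obtain ⟨lstar, hlstarmem, hlstareq⟩ := Finset.exists_mem_eq_inf' hTne
      (fun l => dotIR (B l) u / dotIR (B l) v0r)
    have hlstarpos : 0 < dotIR (B lstar) v0r := by
      rw [hTpos, Finset.mem_filter] at hlstarmem
      exact hlstarmem.2
    have hlstar0 : dotIR (B lstar) u' = 0 := by
      rw [hdotu', ht₀, hlstareq]
      rw [div_mul_cancel₀ _ (ne_of_gt hlstarpos)]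
      ring
    have hVle : Vsp B u' ≤ Vsp B u := by
      intro x hx l hl
      exact hx l (htight l hl)
    have hVlt : Vsp B u' < Vsp B u := by
      refine lt_of_le_of_ne hVle ?_
      intro heq
      have hmem : v0r ∈ Vsp B u' := heq ▸ (hv4 : v0r ∈ Vsp B u)
      have := hmem lstar hlstar0
      linarith
    have hrk' : Module.finrank ℝ (Vsp B u') ≤ c := by
      have h5 := Submodule.finrank_lt_finrank_of_lt hVlt
      omega
    obtain ⟨N, lam, vv, hN, hlam, hvvnz, hvvfeas, hvvb, hsum⟩ := ih u' hrk' hfeas'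
    by_cases ht0 : t₀ = 0
    · refine ⟨N, lam, vv, by omega, hlam, hvvnz, hvvfeas, hvvb, ?_⟩
      rw [← hsum, hu', ht0, zero_smul, sub_zero]
    · refine ⟨N+1, Fin.cons t₀ lam, Fin.cons v₀ vv, by omega, ?_, ?_, ?_, ?_, ?_⟩
      · intro k
        refine Fin.cases ?_ ?_ k
        · simpa using lt_of_le_of_ne ht₀0 (Ne.symm ht0)
        · intro k'; simpa using hlam k'
      · intro k
        refine Fin.cases ?_ ?_ k
        · simpa using hv1
        · intro k'; simpa using hvvnz k'
      · intro k l
        refine Fin.cases ?_ ?_ k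
        · simpa using hv2 l
        · intro k'; simpa using hvvfeas k' l
      · intro k j
        refine Fin.cases ?_ ?_ k
        · simpa using hv3 j
        · intro k'; simpa using hvvb k' j
      · rw [Fin.sum_univ_succ]
        simp only [Fin.cons_zero, Fin.cons_succ]
        rw [← hsum, hu']
        funext j
        simp [hv0r]

lemma dotIR_single (j : Fin n) (c : ℤ) (z : Fin n → ℝ) :
    dotIR (Pi.single j c) z = (c : ℝ) * z j := by
  rw [dotIR, Finset.sum_eq_single j]
  · simp
  · intro l _ hl
    simp [Pi.single_eq_of_ne hl]
  · simp

lemma dotIR_intSmul (a : ℤ) (c : Fin n → ℤ) (z : Fin n → ℝ) :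
    dotIR (a • c) z = (a : ℝ) * dotIR c z := by
  rw [dotIR, dotIR, Finset.mul_sum]
  apply Finset.sum_congr rfl
  intro j _
  simp only [Pi.smul_apply, smul_eq_mul]
  push_cast
  ring

lemma dotIR_sub (c : Fin n → ℤ) (x y : Fin n → ℝ) :
    dotIR c (x - y) = dotIR c x - dotIR c y := by
  simp [dotIR, mul_sub, Finset.sum_sub_distrib]

lemma dotIR_sumFin {N : ℕ} (c : Fin n → ℤ) (f : Fin N → Fin n → ℝ) :
    dotIR c (∑ k, f k) = ∑ k, dotIR c (f k) := by
  simp only [dotIR, Finset.sum_apply, Finset.mul_sum]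
  exact Finset.sum_comm

lemma descentStep (m n : ℕ) (A : Matrix (Fin m) (Fin n) ℤ) (b : Fin m → ℝ)
    (M D : ℤ) (hM1 : 1 ≤ M) (hD1 : 1 ≤ D)
    (hM : ∀ (s : ℕ) (f : Fin s → Fin m) (g : Fin s → Fin n),
      Function.Injective f → Function.Injective g → |(A.submatrix f g).det| ≤ M)
    (y : Fin n → ℝ) (hy : ∀ i, dotIR (A i) y ≤ b i)
    (x : Fin n → ℤ) (hx : ∀ i, dotIR (A i) (fun j => (x j : ℝ)) ≤ b i)
    (j₀ : Fin n) (hviol : (n : ℝ) * (D:ℝ) * (M:ℝ) < |(x j₀ : ℝ) - y j₀|) :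
    ∃ x' : Fin n → ℤ,
      (∀ i, dotIR (A i) (fun j => (x' j : ℝ)) ≤ b i) ∧
      (∀ j, (D:ℤ) ∣ (x j - x' j)) ∧
      (∀ j, |(x' j : ℝ) - y j| ≤ |(x j : ℝ) - y j|) ∧
      (∑ j, |(x' j : ℝ) - y j|) + 1 ≤ ∑ j, |(x j : ℝ) - y j| := by
  classical
  have hMr : (1:ℝ) ≤ (M:ℝ) := by exact_mod_cast hM1
  have hDr : (1:ℝ) ≤ (D:ℝ) := by exact_mod_cast hD1
  have hnpos : 0 < n := j₀.pos
  set u : Fin n → ℝ := (fun j => (x j : ℝ)) - y with hu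
  have huj : ∀ j, u j = (x j : ℝ) - y j := fun j => rfl
  set σ : Fin m → ℤ := fun i => if 0 ≤ dotIR (A i) u then 1 else -1 with hσ
  set τ : Fin n → ℤ := fun j => if 0 ≤ u j then 1 else -1 with hτ
  set B : (Fin m ⊕ Fin n) → Fin n → ℤ :=
    Sum.elim (fun i => σ i • A i) (fun j => Pi.single j (τ j)) with hB
  have hτ1 : ∀ j, (τ j : ℝ) * u j = |u j| := by
    intro j
    simp only [hτ]
    by_cases h : 0 ≤ u j
    · rw [if_pos h, abs_of_nonneg h]; push_cast; ring
    · push_neg at h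
      rw [if_neg (not_le.mpr h), abs_of_neg h]; push_cast; ring
  have htau_abs : ∀ (j : Fin n) (a : ℝ), 0 ≤ (τ j:ℝ) * a → |a| = (τ j:ℝ) * a := by
    intro j a ha
    simp only [hτ] at ha ⊢
    by_cases h : 0 ≤ u j
    · rw [if_pos h] at ha ⊢
      push_cast at ha ⊢
      rw [abs_of_nonneg (by linarith)]; ring
    · rw [if_neg h] at ha ⊢
      push_cast at ha ⊢
      rw [abs_of_nonpos (by linarith)]; ring
  have hfeasu : ∀ l, 0 ≤ dotIR (B l) u := by
    rintro (i | j)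
    · show 0 ≤ dotIR (σ i • A i) u
      rw [dotIR_intSmul]
      simp only [hσ]
      by_cases h : 0 ≤ dotIR (A i) u
      · rw [if_pos h]; push_cast; linarith
      · push_neg at h
        rw [if_neg (not_le.mpr h)]; push_cast; nlinarith
    · show 0 ≤ dotIR (Pi.single j (τ j)) u
      rw [dotIR_single, hτ1 j]
      exact abs_nonneg _
  have HB : ∀ (s : ℕ) (h : Fin s → Fin n → ℤ) (g : Fin s → Fin n),
      (∀ k, (∃ l, h k = B l) ∨ (∃ j, ∃ c : ℤ, |c| ≤ 1 ∧ h k = Pi.single j c)) →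
      |(Matrix.of fun a b => h a (g b)).det| ≤ M := by
    intro s h g hrow
    apply mixedMinor A M hM s h g
    intro k
    rcases hrow k with ⟨l, hl⟩ | ⟨j, c, hc, hk⟩
    · rcases l with i | j
      · left
        refine ⟨i, σ i, ?_, hl⟩
        simp only [hσ]; split_ifs <;> norm_num
      · right
        refine ⟨j, τ j, ?_, hl⟩
        simp only [hτ]; split_ifs <;> norm_num
    · right; exact ⟨j, c, hc, hk⟩
  have Hsep : ∀ z : Fin n → ℝ, z ≠ 0 → ∃ l, dotIR (B l) z ≠ 0 := by
    intro z hz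
    have hex : ∃ j, z j ≠ 0 := by
      by_contra h
      push_neg at h
      exact hz (funext h)
    obtain ⟨j, hj⟩ := hex
    refine ⟨Sum.inr j, ?_⟩
    show dotIR (Pi.single j (τ j)) z ≠ 0
    rw [dotIR_single]
    apply mul_ne_zero _ hj
    simp only [hτ]; split_ifs <;> norm_num
  have hrk : Module.finrank ℝ (Vsp B u) ≤ n := by
    refine le_trans (Submodule.finrank_le _) ?_
    simp [Module.finrank_pi]
  obtain ⟨N, lam, v, hN, hlam, hnz, hvfeas, hvb, hsum⟩ :=
    coneDecomp B M HB Hsep n u hrk hfeasu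
  have hujsum : ∀ j, u j = ∑ k, lam k * (v k j : ℝ) := by
    intro j
    conv_lhs => rw [hsum]
    rw [Finset.sum_apply]
    apply Finset.sum_congr rfl
    intro k _
    simp
  have hNpos : 0 < N := by
    rcases Nat.eq_zero_or_pos N with h | h
    · exfalso
      have h0 : u j₀ = 0 := by
        rw [hujsum j₀]
        subst h
        simp
      rw [huj j₀] at h0
      rw [h0] at hviol
      simp only [abs_zero] at hviol
      have h1 : (0:ℝ) ≤ (n:ℝ) := Nat.cast_nonneg n
      have hMD : (0:ℝ) ≤ (D:ℝ) * (M:ℝ) := by nlinarith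
      have h2 : (0:ℝ) ≤ (n:ℝ) * (D:ℝ) * (M:ℝ) := by
        rw [mul_assoc]; exact mul_nonneg h1 hMD
      linarith
    · exact h
  haveI : Nonempty (Fin N) := ⟨⟨0, hNpos⟩⟩
  -- sum of lam is large
  have hslam : (n:ℝ) * (D:ℝ) < ∑ k, lam k := by
    have h1 : |u j₀| ≤ (∑ k, lam k) * (M:ℝ) := by
      rw [hujsum j₀, Finset.sum_mul]
      refine le_trans (Finset.abs_sum_le_sum_abs _ _) ?_
      apply Finset.sum_le_sum
      intro k _
      rw [abs_mul, abs_of_pos (hlam k)]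
      apply mul_le_mul_of_nonneg_left _ (hlam k).le
      have := hvb k j₀
      calc |((v k j₀ : ℤ) : ℝ)| = ((|v k j₀| : ℤ) : ℝ) := by push_cast; rfl
        _ ≤ (M:ℝ) := by exact_mod_cast this
    rw [huj j₀] at h1
    have h2 : (n:ℝ) * (D:ℝ) * (M:ℝ) < (∑ k, lam k) * (M:ℝ) := lt_of_lt_of_le hviol h1
    have hMpos : (0:ℝ) < (M:ℝ) := by linarith
    exact lt_of_mul_lt_mul_right h2 hMpos.le
  -- pick the max lam
  obtain ⟨kstar, -, hkstar⟩ := Finset.exists_max_image Finset.univ lam Finset.univ_nonempty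
  have hDlam : (D:ℝ) ≤ lam kstar := by
    have h3 : ∑ k, lam k ≤ (N:ℝ) * lam kstar := by
      have := Finset.sum_le_card_nsmul Finset.univ lam (lam kstar)
        (fun k _ => hkstar k (Finset.mem_univ k))
      simpa [nsmul_eq_mul] using this
    have hNn : (N:ℝ) ≤ (n:ℝ) := by exact_mod_cast hN
    have hlk : 0 < lam kstar := hlam kstar
    have h4 : (n:ℝ) * (D:ℝ) < (n:ℝ) * lam kstar := by
      calc (n:ℝ) * (D:ℝ) < ∑ k, lam k := hslam
        _ ≤ (N:ℝ) * lam kstar := h3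
        _ ≤ (n:ℝ) * lam kstar := by nlinarith
    have hn0 : (0:ℝ) < (n:ℝ) := by exact_mod_cast hnpos
    nlinarith
  set w : Fin n → ℤ := v kstar with hw
  have key1 : ∀ (k : Fin N) (j : Fin n), (0:ℝ) ≤ (τ j:ℝ) * (v k j:ℝ) := by
    intro k j
    have := hvfeas k (Sum.inr j)
    rw [show B (Sum.inr j) = Pi.single j (τ j) from rfl, dotIR_single] at this
    exact this
  have key2 : ∀ j, (D:ℝ) * ((τ j:ℝ) * (w j:ℝ)) ≤ (τ j:ℝ) * u j := by
    intro j
    have e1 : (τ j:ℝ) * u j = ∑ k, lam k * ((τ j:ℝ) * (v k j:ℝ)) := by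
      rw [hujsum j, Finset.mul_sum]
      apply Finset.sum_congr rfl
      intro k _
      ring
    have e2 : lam kstar * ((τ j:ℝ) * (w j:ℝ)) ≤ ∑ k, lam k * ((τ j:ℝ) * (v k j:ℝ)) :=
      Finset.single_le_sum (f := fun k => lam k * ((τ j:ℝ) * (v k j:ℝ)))
        (fun k _ => mul_nonneg (hlam k).le (key1 k j)) (Finset.mem_univ kstar)
    have e3 : (D:ℝ) * ((τ j:ℝ) * (w j:ℝ)) ≤ lam kstar * ((τ j:ℝ) * (w j:ℝ)) :=
      mul_le_mul_of_nonneg_right hDlam (key1 kstar j)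
    rw [e1]
    exact le_trans e3 e2
  refine ⟨fun j => x j - D * w j, ?_, ?_, ?_, ?_⟩
  · -- feasibility
    intro i
    set si := dotIR (A i) (fun j => (w j:ℝ)) with hsi
    have hcastx' : (fun j => ((x j - D * w j : ℤ) : ℝ)) =
        (fun j => (x j : ℝ)) - (D:ℝ) • (fun j => (w j:ℝ)) := by
      funext j
      push_cast
      simp
    have e2 : dotIR (A i) (fun j => ((x j - D * w j : ℤ) : ℝ)) =
        dotIR (A i) (fun j => (x j:ℝ)) - (D:ℝ) * si := by
      rw [hcastx', dotIR_sub, dotIR_smul, hsi]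
    have hri : dotIR (A i) u = dotIR (A i) (fun j => (x j:ℝ)) - dotIR (A i) y := by
      rw [hu, dotIR_sub]
    have hsig : ∀ k, 0 ≤ (σ i : ℝ) * dotIR (A i) (fun j => (v k j : ℝ)) := by
      intro k
      have := hvfeas k (Sum.inl i)
      rw [show B (Sum.inl i) = σ i • A i from rfl, dotIR_intSmul] at this
      exact this
    have hrknown : (D:ℝ) * ((σ i:ℝ) * si) ≤ (σ i:ℝ) * dotIR (A i) u := by
      have e4 : dotIR (A i) u = ∑ k, lam k * dotIR (A i) (fun j => (v k j : ℝ)) := by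
        rw [hsum, dotIR_sumFin]
        apply Finset.sum_congr rfl
        intro k _
        rw [dotIR_smul]
      have e5 : (σ i:ℝ) * dotIR (A i) u
          = ∑ k, lam k * ((σ i:ℝ) * dotIR (A i) (fun j => (v k j : ℝ))) := by
        rw [e4, Finset.mul_sum]
        apply Finset.sum_congr rfl
        intro k _
        ring
      have e6 : lam kstar * ((σ i:ℝ) * si) ≤
          ∑ k, lam k * ((σ i:ℝ) * dotIR (A i) (fun j => (v k j : ℝ))) :=
        Finset.single_le_sum
          (f := fun k => lam k * ((σ i:ℝ) * dotIR (A i) (fun j => (v k j : ℝ))))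
          (fun k _ => mul_nonneg (hlam k).le (hsig k)) (Finset.mem_univ kstar)
      have e7 : (D:ℝ) * ((σ i:ℝ) * si) ≤ lam kstar * ((σ i:ℝ) * si) :=
        mul_le_mul_of_nonneg_right hDlam (hsig kstar)
      rw [e5]
      exact le_trans e7 e6
    rw [e2]
    by_cases h : 0 ≤ dotIR (A i) u
    · have hσi : σ i = 1 := by simp only [hσ]; simp [h]
      have hs0 : 0 ≤ si := by
        have h5 := hsig kstar
        rw [hσi] at h5
        push_cast at h5
        have h6 : dotIR (A i) (fun j => ((v kstar j : ℤ) : ℝ)) = si := rfl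
        rw [h6] at h5
        linarith
      have hDsi : 0 ≤ (D:ℝ) * si := mul_nonneg (by linarith) hs0
      have := hx i
      linarith
    · have hσi : σ i = -1 := by simp only [hσ]; simp [h]
      push_neg at h
      rw [hσi] at hrknown
      have h7 : dotIR (A i) u ≤ (D:ℝ) * si := by
        have h8 : ((-1:ℤ):ℝ) * dotIR (A i) u = -(dotIR (A i) u) := by push_cast; ring
        have h9 : (D:ℝ) * (((-1:ℤ):ℝ) * si) = -((D:ℝ) * si) := by push_cast; ring
        rw [h8, h9] at hrknown
        linarith
      linarith [hri, h7, hy i]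
  · -- divisibility
    intro j
    exact ⟨w j, by ring⟩
  · -- coordinatewise bound
    intro j
    have e1 : ((x j - D * w j : ℤ) : ℝ) - y j = u j - (D:ℝ) * (w j:ℝ) := by
      rw [huj j]; push_cast; ring
    rw [e1]
    have habs : |u j - (D:ℝ) * (w j:ℝ)| = (τ j:ℝ) * (u j - (D:ℝ) * (w j:ℝ)) := by
      apply htau_abs
      have := key2 j
      nlinarith [key1 kstar j]
    rw [habs]
    have h8 : (τ j:ℝ) * (u j - (D:ℝ) * (w j:ℝ)) = (τ j:ℝ) * u j - (D:ℝ) * ((τ j:ℝ) * (w j:ℝ)) := by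
      ring
    rw [h8, hτ1 j, ← huj j]
    have h9 : 0 ≤ (D:ℝ) * ((τ j:ℝ) * (w j:ℝ)) :=
      mul_nonneg (by linarith) (key1 kstar j)
    rw [huj j] at *
    linarith
  · -- sum decrease
    have hsum1 : (1:ℝ) ≤ ∑ j, (τ j:ℝ) * (w j:ℝ) := by
      have hex : ∃ j1, w j1 ≠ 0 := by
        by_contra hc
        push_neg at hc
        apply hnz kstar
        funext j
        rw [show v kstar = w from rfl, hc j]
        simp
      obtain ⟨j1, hj1⟩ := hex
      have hterm : ∀ j, (0:ℤ) ≤ τ j * w j := by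
        intro j
        have := key1 kstar j
        exact_mod_cast this
      have hterm1 : (1:ℤ) ≤ τ j1 * w j1 := by
        have h0 : τ j1 * w j1 ≠ 0 := by
          apply mul_ne_zero _ hj1
          simp only [hτ]; split_ifs <;> norm_num
        have := hterm j1
        omega
      have hZ : (1:ℤ) ≤ ∑ j, τ j * w j := by
        calc (1:ℤ) ≤ τ j1 * w j1 := hterm1
          _ ≤ ∑ j, τ j * w j :=
            Finset.single_le_sum (fun j _ => hterm j) (Finset.mem_univ j1)
      calc (1:ℝ) ≤ ((∑ j, τ j * w j : ℤ) : ℝ) := by exact_mod_cast hZ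
        _ = ∑ j, (τ j:ℝ) * (w j:ℝ) := by push_cast; rfl
    have hterm2 : ∀ j, |((x j - D * w j : ℤ) : ℝ) - y j|
        = |(x j:ℝ) - y j| - (D:ℝ) * ((τ j:ℝ) * (w j:ℝ)) := by
      intro j
      have e1 : ((x j - D * w j : ℤ) : ℝ) - y j = u j - (D:ℝ) * (w j:ℝ) := by
        rw [huj j]; push_cast; ring
      rw [e1]
      have habs : |u j - (D:ℝ) * (w j:ℝ)| = (τ j:ℝ) * (u j - (D:ℝ) * (w j:ℝ)) := by
        apply htau_abs
        have := key2 j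
        nlinarith [key1 kstar j]
      rw [habs]
      have h8 : (τ j:ℝ) * (u j - (D:ℝ) * (w j:ℝ))
          = (τ j:ℝ) * u j - (D:ℝ) * ((τ j:ℝ) * (w j:ℝ)) := by ring
      rw [h8, hτ1 j, huj j]
    calc (∑ j, |((x j - D * w j : ℤ) : ℝ) - y j|) + 1
        = (∑ j, (|(x j:ℝ) - y j| - (D:ℝ) * ((τ j:ℝ) * (w j:ℝ)))) + 1 := by
          congr 1
          exact Finset.sum_congr rfl (fun j _ => hterm2 j)
      _ = (∑ j, |(x j:ℝ) - y j|) - (D:ℝ) * (∑ j, (τ j:ℝ) * (w j:ℝ)) + 1 := by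
          rw [Finset.sum_sub_distrib, ← Finset.mul_sum]
      _ ≤ ∑ j, |(x j:ℝ) - y j| := by nlinarith

end SDBMAux

/-- Let `S = {x ∈ ℝⁿ | Ax ≤ b}` be a nonempty polyhedron with `A` an integer
matrix, let `L` be the (integer) solution set of single-variable congruence
constraints `x i ≡ r i (mod d i)` with `D = lcm` of the `d i`, and suppose
`S ∩ L ≠ ∅`.  If `M` bounds the absolute value of every sub-determinant of `A`
(in particular `M = MASD(A)` works), then for every `y ∈ S` there is
`x ∈ S ∩ L` with `‖x - y‖_∞ ≤ n·D·M`. -/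
theorem sdbm_solution_close (m n : ℕ) (A : Matrix (Fin m) (Fin n) ℤ)
    (b : Fin m → ℝ) (d r : Fin n → ℤ) (hd : ∀ i, 1 ≤ d i)
    (D : ℤ) (hD : D = Finset.univ.lcm d)
    (M : ℤ)
    (hM : ∀ (s : ℕ) (f : Fin s → Fin m) (g : Fin s → Fin n),
      Function.Injective f → Function.Injective g →
      |(A.submatrix f g).det| ≤ M)
    (S : Set (Fin n → ℝ))
    (hS : S = {x | ∀ i : Fin m, ∑ j, (A i j : ℝ) * x j ≤ b i})
    (L : Set (Fin n → ℝ))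
    (hL : L = {x | ∃ z : Fin n → ℤ, (∀ i, x i = (z i : ℝ)) ∧
      ∀ i, z i ≡ r i [ZMOD d i]})
    (hSL : (S ∩ L).Nonempty) :
    ∀ y ∈ S, ∃ x ∈ S ∩ L, ∀ i, |x i - y i| ≤ (n : ℝ) * (D : ℝ) * (M : ℝ) := by
  classical
  intro y hy
  have hM1 : 1 ≤ M := by
    have := hM 0 (fun a => a.elim0) (fun a => a.elim0) (fun a => a.elim0) (fun a => a.elim0)
    simpa [Matrix.det_fin_zero] using this
  have hD1 : 1 ≤ D := by
    have h0 : normalize D = D := by rw [hD]; exact Finset.normalize_lcm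
    have habs : |D| = D := by rw [Int.abs_eq_normalize, h0]
    have hnn : 0 ≤ D := by rw [← habs]; exact abs_nonneg D
    have hne : D ≠ 0 := by
      rw [hD, Ne, Finset.lcm_eq_zero_iff]
      intro h
      obtain ⟨i, -, hi⟩ := h
      have := hd i
      omega
    omega
  have hdD : ∀ i, d i ∣ D := by
    intro i
    rw [hD]
    exact Finset.dvd_lcm (Finset.mem_univ i)
  have hyS : ∀ i, SDBMAux.dotIR (A i) y ≤ b i := by
    rw [hS] at hy
    exact hy
  -- initial integral point
  obtain ⟨x0r, hx0S, hx0L⟩ := hSL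
  rw [hL] at hx0L
  obtain ⟨z0, hz0eq, hz0cong⟩ := hx0L
  have hxeq : x0r = fun j => (z0 j : ℝ) := funext hz0eq
  rw [hS] at hx0S
  have hz0feas : ∀ i, SDBMAux.dotIR (A i) (fun j => (z0 j : ℝ)) ≤ b i := by
    intro i
    have := hx0S i
    rw [hxeq] at this
    exact this
  have main : ∀ (K : ℕ) (x : Fin n → ℤ),
      (∀ i, SDBMAux.dotIR (A i) (fun j => (x j : ℝ)) ≤ b i) →
      (∀ i, x i ≡ r i [ZMOD d i]) →
      (∑ j, |(x j : ℝ) - y j|) ≤ (K:ℝ) →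
      ∃ x' : Fin n → ℤ,
        (∀ i, SDBMAux.dotIR (A i) (fun j => (x' j : ℝ)) ≤ b i) ∧
        (∀ i, x' i ≡ r i [ZMOD d i]) ∧
        (∀ j, |(x' j : ℝ) - y j| ≤ (n:ℝ) * (D:ℝ) * (M:ℝ)) := by
    intro K
    induction K with
    | zero =>
      intro x hfx hcx hbd
      refine ⟨x, hfx, hcx, ?_⟩
      intro j
      have h1 : |(x j:ℝ) - y j| ≤ ∑ j', |(x j':ℝ) - y j'| :=
        Finset.single_le_sum (f := fun j' => |(x j':ℝ) - y j'|)
          (fun j' _ => abs_nonneg _) (Finset.mem_univ j)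
      have hterm : |(x j:ℝ) - y j| ≤ 0 := by
        simpa using le_trans h1 hbd
      have hDr : (1:ℝ) ≤ (D:ℝ) := by exact_mod_cast hD1
      have hMr : (1:ℝ) ≤ (M:ℝ) := by exact_mod_cast hM1
      have h2 : (0:ℝ) ≤ (n:ℝ) := Nat.cast_nonneg n
      have h3 : (0:ℝ) ≤ (n:ℝ) * (D:ℝ) * (M:ℝ) := by
        have h4 : (0:ℝ) ≤ (D:ℝ) * (M:ℝ) := by nlinarith
        rw [mul_assoc]
        exact mul_nonneg h2 h4
      linarith
    | succ K ihK =>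
      intro x hfx hcx hbd
      by_cases hgood : ∀ j, |(x j:ℝ) - y j| ≤ (n:ℝ) * (D:ℝ) * (M:ℝ)
      · exact ⟨x, hfx, hcx, hgood⟩
      · push_neg at hgood
        obtain ⟨j₀, hj₀⟩ := hgood
        obtain ⟨x', hfx', hdvd, hle, hdec⟩ :=
          SDBMAux.descentStep m n A b M D hM1 hD1 hM y hyS x hfx j₀ hj₀
        have hcx' : ∀ i, x' i ≡ r i [ZMOD d i] := by
          intro i
          have h1 : d i ∣ (x i - x' i) := dvd_trans (hdD i) (hdvd i)
          have h2 : x' i ≡ x i [ZMOD d i] := Int.modEq_iff_dvd.mpr h1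
          exact h2.trans (hcx i)
        apply ihK x' hfx' hcx'
        push_cast at hbd ⊢
        linarith
  obtain ⟨x', hfx', hcx', hbd'⟩ := main ⌈∑ j, |(z0 j:ℝ) - y j|⌉₊ z0 hz0feas hz0cong
    (Nat.le_ceil _)
  refine ⟨fun j => (x' j : ℝ), ⟨?_, ?_⟩, ?_⟩
  · rw [hS]
    intro i
    exact hfx' i
  · rw [hL]
    exact ⟨x', fun i => rfl, hcx'⟩
  · intro i
    exact hbd' i
end

section
/- Let C be a variable-bound-free SDBM with zero remainders and suppose the congruence constraint on x_n is x_n ≡ 0 (mod D), where D is the lcm of all congruence divisors. For t ∈ Dℤ, let S_t be the set of solutions with x_n = t. Then S_t = {x + t : x ∈ S_0}, and S_t = ∅ for t ∉ Dℤ. -/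
/-! Adding the same integer `t` to every coordinate leaves each difference `-x i + x j`
unchanged, and when `t` is a multiple of `D = lcm d` it also preserves every congruence
`x i ≡ 0 (mod d i)`. So translation by `t` maps the fibre over `0` onto the fibre over `t`;
and since `x n ≡ 0 (mod D)` is itself a constraint, the fibre over any `t ∉ Dℤ` is empty. -/

section

variable {ι : Type*}

def sdbmSolutions (d : ι → ℤ) (E : Set (ι × ι × ℤ)) : Set (ι → ℤ) :=
  {x | (∀ i, d i ∣ x i) ∧ ∀ p ∈ E, -x p.1 + x p.2.1 ≤ p.2.2}

theorem add_const_mem_sdbmSolutions_iff {d : ι → ℤ} {E : Set (ι × ι × ℤ)} {t : ℤ}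
    (ht : ∀ i, d i ∣ t) (x : ι → ℤ) :
    (fun i => x i + t) ∈ sdbmSolutions d E ↔ x ∈ sdbmSolutions d E := by
  have hdiff : ∀ i j, -(x i + t) + (x j + t) = -x i + x j := fun i j => by ring
  simp only [sdbmSolutions, Set.mem_ofPred_eq, hdiff, fun i => dvd_add_left (ht i)]

theorem sdbmSolutions_inter_eq_empty {d : ι → ℤ} {E : Set (ι × ι × ℤ)} {k : ι} {t : ℤ}
    (ht : ¬ d k ∣ t) : sdbmSolutions d E ∩ {x | x k = t} = ∅ :=
  Set.eq_empty_of_forall_notMem fun _ ⟨⟨hdvd, _⟩, hk⟩ => ht (hk ▸ hdvd k)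

theorem inter_coord_eq_image_add_const {G : Type*} [AddGroup G] {A : Set (ι → G)}
    (k : ι) (t : G) (hA : ∀ x, (fun i => x i + t) ∈ A ↔ x ∈ A) :
    A ∩ {x | x k = t} = (fun x i => x i + t) '' (A ∩ {x | x k = 0}) := by
  ext y
  constructor
  · rintro ⟨hy, hk : y k = t⟩
    refine ⟨fun i => y i - t, ⟨(hA _).1 ?_, by simp [hk]⟩, by simp⟩
    simpa using hy
  · rintro ⟨x, ⟨hx, hk : x k = 0⟩, rfl⟩
    exact ⟨(hA x).2 hx, by simp [hk]⟩

end

theorem sdbm_solution_fibers_general (n : ℕ) (E : Set (Fin (n + 1) × Fin (n + 1) × ℤ))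
    (d : Fin (n + 1) → ℤ)
    (D : ℤ) (hD : D = Finset.univ.lcm d) (hlast : d (Fin.last n) = D)
    (S : ℤ → Set (Fin (n + 1) → ℤ))
    (hS : ∀ t, S t = {x | (∀ i, d i ∣ x i) ∧
      (∀ p ∈ E, -x p.1 + x p.2.1 ≤ p.2.2) ∧ x (Fin.last n) = t}) :
    (∀ t : ℤ, D ∣ t → S t = (fun (x : Fin (n + 1) → ℤ) (i : Fin (n + 1)) => x i + t) '' S 0) ∧
    (∀ t : ℤ, ¬ D ∣ t → S t = ∅) := by
  have hS' : ∀ t, S t = sdbmSolutions d E ∩ {x | x (Fin.last n) = t} := fun t => by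
    rw [hS]
    ext x
    simp only [sdbmSolutions, Set.mem_ofPred_eq, Set.mem_inter_iff, and_assoc]
  have hdiv : ∀ i, d i ∣ D := fun i => hD ▸ Finset.dvd_lcm (Finset.mem_univ i)
  refine ⟨fun t ht => ?_, fun t ht => ?_⟩
  · rw [hS', hS']
    exact inter_coord_eq_image_add_const _ t
      (add_const_mem_sdbmSolutions_iff fun i => (hdiv i).trans ht)
  · rw [hS']
    exact sdbmSolutions_inter_eq_empty (hlast ▸ ht)

/-- For a variable-bound-free SDBM with zero remainders whose last variable has
congruence divisor `D = lcm(d)`, the set `S t` of solutions with last coordinate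
equal to `t` satisfies `S t = {x + t | x ∈ S 0}` for `t ∈ Dℤ`, and `S t = ∅`
for `t ∉ Dℤ`. -/
theorem sdbm_solution_fibers (n : ℕ) (E : Set (Fin (n + 1) × Fin (n + 1) × ℤ))
    (d : Fin (n + 1) → ℤ) (hd : ∀ i, 1 ≤ d i)
    (D : ℤ) (hD : D = Finset.univ.lcm d) (hlast : d (Fin.last n) = D)
    (S : ℤ → Set (Fin (n + 1) → ℤ))
    (hS : ∀ t, S t = {x | (∀ i, d i ∣ x i) ∧
      (∀ p ∈ E, -x p.1 + x p.2.1 ≤ p.2.2) ∧ x (Fin.last n) = t}) :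
    (∀ t : ℤ, D ∣ t → S t = (fun (x : Fin (n + 1) → ℤ) (i : Fin (n + 1)) => x i + t) '' S 0) ∧
    (∀ t : ℤ, ¬ D ∣ t → S t = ∅) :=
  sdbm_solution_fibers_general n E d D hD hlast S hS
end

section
/- Given an SDBM C with variable bounds ℓ_i ≤ x_i ≤ u_i, zero remainders, and lcm of divisors D, construct the variable-bound-free SDBM C' by adding a variable x_0 with constraint x_0 ≡ 0 (mod D) and replacing each bound ℓ_i ≤ x_i ≤ u_i by ℓ_i ≤ x_i - x_0 ≤ u_i. Then C is satisfiable iff C' is satisfiable. -/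
theorem neg_sub_add_sub_right {α : Type*} [AddCommGroup α] (a b c : α) :
    -(a - c) + (b - c) = -a + b := by
  abel

theorem sdbm_vbf_conversion_general (n : ℕ) (E : Set (Fin n × Fin n × ℤ))
    (d ℓ u : Fin n → ℤ)
    (D : ℤ) (hD : D = Finset.univ.lcm d) :
    (∃ x : Fin n → ℤ, (∀ i, d i ∣ x i) ∧
      (∀ p ∈ E, -x p.1 + x p.2.1 ≤ p.2.2) ∧
      (∀ i, ℓ i ≤ x i ∧ x i ≤ u i)) ↔
    (∃ (x₀ : ℤ) (x : Fin n → ℤ), (∀ i, d i ∣ x i) ∧ D ∣ x₀ ∧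
      (∀ p ∈ E, -x p.1 + x p.2.1 ≤ p.2.2) ∧
      (∀ i, ℓ i ≤ x i - x₀ ∧ x i - x₀ ≤ u i)) := by
  constructor
  · rintro ⟨x, hdvd, hdiff, hbound⟩
    exact ⟨0, x, hdvd, dvd_zero D, hdiff, by simpa using hbound⟩
  · -- Shifting by `-x₀` keeps all differences, and `d i ∣ D ∣ x₀` keeps the congruences.
    rintro ⟨x₀, x, hdvd, hx₀, hdiff, hbound⟩
    have hdx₀ (i : Fin n) : d i ∣ x₀ := (Finset.dvd_lcm (Finset.mem_univ i)).trans (hD ▸ hx₀)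
    refine ⟨fun i => x i - x₀, fun i => dvd_sub (hdvd i) (hdx₀ i), fun p hp => ?_, hbound⟩
    rw [neg_sub_add_sub_right]
    exact hdiff p hp

/-- An SDBM `C` with variable bounds `ℓ i ≤ x i ≤ u i` and zero remainders is
satisfiable iff the variable-bound-free SDBM `C'` is, where `C'` adds a fresh
variable `x₀` with congruence `x₀ ≡ 0 (mod D)` (`D = lcm` of the divisors) and
replaces each bound by `ℓ i ≤ x i - x₀ ≤ u i`. -/
theorem sdbm_vbf_conversion (n : ℕ) (E : Set (Fin n × Fin n × ℤ))
    (d ℓ u : Fin n → ℤ) (hd : ∀ i, 1 ≤ d i)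
    (D : ℤ) (hD : D = Finset.univ.lcm d) :
    (∃ x : Fin n → ℤ, (∀ i, d i ∣ x i) ∧
      (∀ p ∈ E, -x p.1 + x p.2.1 ≤ p.2.2) ∧
      (∀ i, ℓ i ≤ x i ∧ x i ≤ u i)) ↔
    (∃ (x₀ : ℤ) (x : Fin n → ℤ), (∀ i, d i ∣ x i) ∧ D ∣ x₀ ∧
      (∀ p ∈ E, -x p.1 + x p.2.1 ≤ p.2.2) ∧
      (∀ i, ℓ i ≤ x i - x₀ ∧ x i - x₀ ≤ u i)) :=
  sdbm_vbf_conversion_general n E d ℓ u D hD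
end

section
/- Let H be a path-closed, GCD-tight, variable-bound-free harmonic SDBM (d_1 | ⋯ | d_n, all remainders zero) in which for every i < n the constraint -x_n + x_i ≤ c_{ni} exists. Then the point defined by x_n = 0 and x_i = c_{ni} for i < n is a solution of H; in particular, all upper bounds c_{ni} on -x_n + x_i are simultaneously attained. -/
/-- In a path-closed, GCD-tight, variable-bound-free harmonic SDBM over
variables `x 0, …, x n` in which every constraint `-x n + x i ≤ c n i` exists,
the point `x n = 0`, `x i = c n i` for `i < n` is a solution; in particular all
the upper bounds `c n i` are simultaneously attained. -/
theorem hsdbm_last_var_bounds_tight (n : ℕ)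
    (Edge : Fin (n + 1) → Fin (n + 1) → Prop)
    (c : Fin (n + 1) → Fin (n + 1) → ℤ)
    (d : Fin (n + 1) → ℤ) (hd : ∀ i, 1 ≤ d i)
    (hharm : ∀ i j : Fin (n + 1), i ≤ j → d i ∣ d j)
    (hgcd : ∀ i j, Edge i j → (Int.gcd (d i) (d j) : ℤ) ∣ c i j)
    (hclosed : ∀ i j k, Edge i j → Edge j k →
      Edge i k ∧ c i k ≤ c i j + c j k)
    (hnoneg : ∀ i, Edge i i → 0 ≤ c i i)
    (hexist : ∀ i : Fin (n + 1), i ≠ Fin.last n → Edge (Fin.last n) i)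
    (x : Fin (n + 1) → ℤ)
    (hx : x = fun i => if i = Fin.last n then 0 else c (Fin.last n) i) :
    (∀ i, d i ∣ x i) ∧ (∀ i j, Edge i j → -x i + x j ≤ c i j) ∧
    (∀ i : Fin (n + 1), i ≠ Fin.last n → -x (Fin.last n) + x i = c (Fin.last n) i) := by
  subst hx
  have hdiv : ∀ i : Fin (n + 1), i ≠ Fin.last n → d i ∣ c (Fin.last n) i := by
    intro i hi
    have h1 : d i ∣ d (Fin.last n) := hharm i (Fin.last n) (Fin.le_last i)
    have h2 : (Int.gcd (d (Fin.last n)) (d i) : ℤ) ∣ c (Fin.last n) i :=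
      hgcd _ _ (hexist i hi)
    have h3 : (Int.gcd (d (Fin.last n)) (d i) : ℤ) = d i := by
      rw [Int.gcd_eq_right (le_trans zero_le_one (hd i)) h1]
    rwa [h3] at h2
  refine ⟨?_, ?_, ?_⟩
  · intro i
    by_cases hi : i = Fin.last n
    · simp [hi]
    · simpa [hi] using hdiv i hi
  · intro i j hij
    by_cases hi : i = Fin.last n <;> by_cases hj : j = Fin.last n
    · subst hi; subst hj; simpa using hnoneg _ hij
    · subst hi; simp [hj]
    · subst hj
      have hni := hexist i hi
      obtain ⟨hnn, hle⟩ := hclosed (Fin.last n) i (Fin.last n) hni hij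
      have := hnoneg _ hnn
      simp only [if_neg hi, if_pos rfl, if_true]
      linarith
    · have hni := hexist i hi
      obtain ⟨_, hle⟩ := hclosed (Fin.last n) i j hni hij
      simp only [hi, hj, if_false]
      linarith
  · intro i hi
    simp [hi]
end
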